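/- Define the mesh function Φ₁(x_i) := ∏_{n=N/2}^{i}(1 + h_n/√(2Tε))^{−1} for N/2 ≤ i ≤ N. Then for all i with N/2 < i < N: √(2ε)·D⁻Φ₁(x_i) = −Φ₁(x_i)/√T, and −ε δ²Φ₁(x_i) ≥ −Φ₁(x_i)/T. -/
import Mathlib


/-- Mesh step sizes `h_i = x_i - x_{i-1}`. -/
noncomputable def hstep (x : ℕ → ℝ) (i : ℕ) : ℝ := x i - x (i - 1)

/-- Forward difference `D⁺Φ(x_i) = (Φ_{i+1} - Φ_i)/h_{i+1}`. -/
noncomputable def Dplus (x : ℕ → ℝ) (Φ : ℕ → ℝ) (i : ℕ) : ℝ :=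
  (Φ (i + 1) - Φ i) / hstep x (i + 1)

/-- Backward difference `D⁻Φ(x_i) = (Φ_i - Φ_{i-1})/h_i`. -/
noncomputable def Dminus (x : ℕ → ℝ) (Φ : ℕ → ℝ) (i : ℕ) : ℝ :=
  (Φ i - Φ (i - 1)) / hstep x i

/-- Second difference `δ²Φ(x_i) = (2/(h_i + h_{i+1}))(D⁺Φ(x_i) - D⁻Φ(x_i))`. -/
noncomputable def delta2 (x : ℕ → ℝ) (Φ : ℕ → ℝ) (i : ℕ) : ℝ :=
  2 / (hstep x i + hstep x (i + 1)) * (Dplus x Φ i - Dminus x Φ i)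


/-- for the mesh barrier function
`Φ₁(x_i) = ∏_(n=N/2)^i (1 + h_n/sqrt(2Tε))⁻¹`, for all `i` with `N/2 < i < N`:
`sqrt(2ε) D⁻Φ₁(x_i) = -Φ₁(x_i)/sqrt T` and `-ε δ²Φ₁(x_i) ≥ -Φ₁(x_i)/T`. -/
theorem stmt_17
    (T ε : ℝ) (hT : 0 < T) (hε : 0 < ε)
    (N : ℕ) (hN : 2 ≤ N) (hNeven : Even N)
    (x : ℕ → ℝ) (hx0 : x 0 = 0) (hxN : x N = 1)
    (hmono : ∀ i < N, x i < x (i + 1))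
    (Φ₁ : ℕ → ℝ)
    (hΦ₁ : ∀ i, N / 2 ≤ i → i ≤ N →
      Φ₁ i = ∏ n ∈ Finset.Icc (N / 2) i, (1 + hstep x n / Real.sqrt (2 * T * ε))⁻¹) :
    ∀ i : ℕ, N / 2 < i → i < N →
      Real.sqrt (2 * ε) * Dminus x Φ₁ i = -(Φ₁ i / Real.sqrt T) ∧
      -(Φ₁ i / T) ≤ -ε * delta2 x Φ₁ i := by
  set s := Real.sqrt (2 * T * ε) with hs_def
  have hs : 0 < s := Real.sqrt_pos.mpr (by positivity)
  have hs2 : s ^ 2 = 2 * T * ε := Real.sq_sqrt (by positivity)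
  -- step sizes are positive for 1 ≤ n ≤ N
  have hpos : ∀ n, 1 ≤ n → n ≤ N → 0 < hstep x n := by
    intro n h1 h2
    obtain ⟨k, rfl⟩ : ∃ k, n = k + 1 := ⟨n - 1, by omega⟩
    have hx : x k < x (k + 1) := hmono k (by omega)
    simp only [hstep, Nat.add_sub_cancel]
    linarith
  have hfac : ∀ n, 1 ≤ n → n ≤ N → 0 < 1 + hstep x n / s := by
    intro n h1 h2
    have := hpos n h1 h2
    positivity
  have hN2 : 1 ≤ N / 2 := by omega
  -- positivity of Φ₁
  have hΦpos : ∀ j, N / 2 ≤ j → j ≤ N → 0 < Φ₁ j := by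
    intro j h1 h2
    rw [hΦ₁ j h1 h2]
    apply Finset.prod_pos
    intro n hn
    simp only [Finset.mem_Icc] at hn
    exact inv_pos.mpr (hfac n (by omega) (by omega))
  -- recurrence
  have hrec : ∀ j, N / 2 ≤ j → j + 1 ≤ N → Φ₁ (j + 1) = Φ₁ j * (1 + hstep x (j + 1) / s)⁻¹ := by
    intro j h1 h2
    rw [hΦ₁ j h1 (by omega), hΦ₁ (j + 1) (by omega) h2,
      Finset.prod_Icc_succ_top (by omega : N / 2 ≤ j + 1)]
  -- difference identity: Φ₁(j+1) - Φ₁ j = -(Φ₁ (j+1) * hstep x (j+1) / s)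
  have hdiff : ∀ j, N / 2 ≤ j → j + 1 ≤ N →
      Φ₁ (j + 1) - Φ₁ j = -(Φ₁ (j + 1) * hstep x (j + 1) / s) := by
    intro j h1 h2
    have hf := hfac (j + 1) (by omega) h2
    have hrec' := hrec j h1 h2
    have hΦj : Φ₁ j = Φ₁ (j + 1) * (1 + hstep x (j + 1) / s) := by
      rw [hrec', mul_assoc, inv_mul_cancel₀ (ne_of_gt hf), mul_one]
    rw [hΦj]; field_simp; ring
  intro i hi1 hi2
  have hi1' : 1 ≤ i := by omega
  obtain ⟨k, rfl⟩ : ∃ k, i = k + 1 := ⟨i - 1, by omega⟩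
  have hk1 : N / 2 ≤ k := by omega
  have hkN : k + 1 ≤ N := by omega
  have hstep1 : 0 < hstep x (k + 1) := hpos (k + 1) (by omega) hkN
  have hstep2 : 0 < hstep x (k + 2) := hpos (k + 2) (by omega) (by omega)
  have hd1 := hdiff k hk1 hkN
  have hd2 := hdiff (k + 1) (by omega) (by omega)
  have hΦi : 0 < Φ₁ (k + 1) := hΦpos (k + 1) (by omega) (by omega)
  have hΦi2 : 0 < Φ₁ (k + 2) := hΦpos (k + 2) (by omega) (by omega)
  have hDm : Dminus x Φ₁ (k + 1) = -(Φ₁ (k + 1) / s) := by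
    simp only [Dminus]
    have : (k + 1 : ℕ) - 1 = k := by omega
    rw [this, hd1]
    field_simp
  have hDp : Dplus x Φ₁ (k + 1) = -(Φ₁ (k + 2) / s) := by
    simp only [Dplus]
    rw [show k + 1 + 1 = k + 2 from rfl, hd2]
    field_simp
  constructor
  · -- first claim
    rw [hDm]
    have hsplit : s = Real.sqrt (2 * ε) * Real.sqrt T := by
      rw [hs_def, show 2 * T * ε = (2 * ε) * T by ring,
        Real.sqrt_mul (by positivity)]
    have h2ε : (0:ℝ) < Real.sqrt (2 * ε) := Real.sqrt_pos.mpr (by positivity)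
    have hsT : (0:ℝ) < Real.sqrt T := Real.sqrt_pos.mpr hT
    rw [hsplit]
    field_simp
  · -- second claim
    have hδ : delta2 x Φ₁ (k + 1) =
        2 / (hstep x (k + 1) + hstep x (k + 2)) *
          (Φ₁ (k + 2) * hstep x (k + 2) / s ^ 2) := by
      simp only [delta2, show k + 1 + 1 = k + 2 from rfl]
      rw [hDp, hDm]
      have hsub : -(Φ₁ (k + 2) / s) - -(Φ₁ (k + 1) / s) = (Φ₁ (k + 1) - Φ₁ (k + 2)) / s := by
        ring
      rw [hsub]
      have : Φ₁ (k + 1) - Φ₁ (k + 2) = Φ₁ (k + 2) * hstep x (k + 2) / s := by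
        have := hd2; rw [show k + 1 + 1 = k + 2 from rfl] at this; linarith
      rw [this]
      rw [sq]
      field_simp
    rw [hδ, hs2]
    have hsum : 0 < hstep x (k + 1) + hstep x (k + 2) := by linarith
    have hratio : hstep x (k + 2) / (hstep x (k + 1) + hstep x (k + 2)) ≤ 1 := by
      rw [div_le_one hsum]; linarith
    have hΦle : Φ₁ (k + 2) ≤ Φ₁ (k + 1) := by
      have hrec' := hrec (k + 1) (by omega) (by omega)
      rw [show k + 1 + 1 = k + 2 from rfl] at hrec'
      have hf := hfac (k + 2) (by omega) (by omega)
      have hinv : (1 + hstep x (k + 2) / s)⁻¹ ≤ 1 := by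
        rw [inv_le_one_iff₀]
        right
        have : 0 ≤ hstep x (k + 2) / s := by positivity
        linarith
      calc Φ₁ (k + 2) = Φ₁ (k + 1) * (1 + hstep x (k + 2) / s)⁻¹ := hrec'
        _ ≤ Φ₁ (k + 1) * 1 := by
            apply mul_le_mul_of_nonneg_left hinv (le_of_lt hΦi)
        _ = Φ₁ (k + 1) := mul_one _
    have key : Φ₁ (k + 2) * (hstep x (k + 2) / (hstep x (k + 1) + hstep x (k + 2))) ≤ Φ₁ (k + 1) := by
      calc Φ₁ (k + 2) * (hstep x (k + 2) / (hstep x (k + 1) + hstep x (k + 2)))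
          ≤ Φ₁ (k + 2) * 1 := mul_le_mul_of_nonneg_left hratio (le_of_lt hΦi2)
        _ = Φ₁ (k + 2) := mul_one _
        _ ≤ Φ₁ (k + 1) := hΦle
    have lhs_eq : -ε * (2 / (hstep x (k + 1) + hstep x (k + 2)) *
        (Φ₁ (k + 2) * hstep x (k + 2) / (2 * T * ε))) =
        -(Φ₁ (k + 2) * (hstep x (k + 2) / (hstep x (k + 1) + hstep x (k + 2))) / T) := by
      field_simp
    rw [lhs_eq]
    have hfin : Φ₁ (k + 2) * (hstep x (k + 2) / (hstep x (k + 1) + hstep x (k + 2))) / T ≤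
        Φ₁ (k + 1) / T := by gcongr
    linarith
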